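/- Let G be a group acting on a set X, let K be a normal subgroup of G whose restricted action on X is free, and let x ∈ X. Let L̄ be a subgroup of G/K that fixes the orbit K•x in X/K (i.e., ḡ•(K•x) = K•x for all ḡ ∈ L̄, for the induced G/K-action on the set X/K of K-orbits). Then there is exactly one subgroup L of the stabilizer Stab_G(x) whose image under the quotient homomorphism G → G/K equals L̄; moreover the quotient homomorphism restricts to an isomorphism from L onto L̄. -/
import Mathlib


/-- An equivariant map `(φ, f) : G⋉X → H⋉Y` between translation groupoids is *fully
faithful* if for all `x, x' ∈ X` and `h ∈ H` with `h • f x = f x'` there is a unique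
`g ∈ G` with `φ g = h` and `g • x = x'`. -/
def IsFullyFaithful {G H : Type*} [Group G] [Group H] {X Y : Type*}
    [MulAction G X] [MulAction H Y] (φ : G →* H) (f : X → Y) : Prop :=
  ∀ (x x' : X) (h : H), h • f x = f x' → ∃! g : G, φ g = h ∧ g • x = x'

/-- An equivariant map with underlying map `f : X → Y` into an `H`-set `Y` is
*essentially surjective* if every `y ∈ Y` is of the form `h • f x`. -/
def IsEssSurj {H : Type*} [Group H] {X Y : Type*} [MulAction H Y] (f : X → Y) : Prop :=
  ∀ y : Y, ∃ (x : X) (h : H), h • f x = y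

variable {G : Type*} [Group G] {X : Type*} [MulAction G X]

/-- The set `X/K` of `K`-orbits of the `G`-set `X`, for a subgroup `K ≤ G`. -/
def OrbitQuot (K : Subgroup G) (X : Type*) [MulAction G X] : Type _ :=
  Quotient (MulAction.orbitRel K X)

/-- The orbit map `X → X/K`. -/
def OrbitQuot.mk (K : Subgroup G) (x : X) : OrbitQuot K X :=
  Quotient.mk (MulAction.orbitRel K X) x

/-- For `K ⊴ G` normal, the induced action of `G/K` on `X/K`: `(gK) • (K•x) = K•(g•x)`. -/
instance OrbitQuot.instMulAction (K : Subgroup G) [K.Normal] :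
    MulAction (G ⧸ K) (OrbitQuot K X) where
  smul g x := Quotient.liftOn₂ g x (fun g x => OrbitQuot.mk K (g • x)) <| by
    intro g₁ x₁ g₂ x₂ hg hx
    have hg' : g₁⁻¹ * g₂ ∈ K := QuotientGroup.leftRel_apply.mp hg
    have hx' : x₁ ∈ MulAction.orbit K x₂ := hx
    obtain ⟨k, hk⟩ := hx'
    apply Quotient.sound
    show g₁ • x₁ ∈ MulAction.orbit K (g₂ • x₂)
    refine ⟨⟨g₁ * ((k : G) * (g₁⁻¹ * g₂)⁻¹) * g₁⁻¹,
      Subgroup.Normal.conj_mem inferInstance _ (K.mul_mem k.2 (K.inv_mem hg')) g₁⟩, ?_⟩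
    show (g₁ * ((k : G) * (g₁⁻¹ * g₂)⁻¹) * g₁⁻¹) • g₂ • x₂ = g₁ • x₁
    have hk' : (k : G) • x₂ = x₁ := hk
    rw [← hk', ← mul_smul, ← mul_smul]
    congr 1
    group
  one_smul := by
    rintro ⟨x⟩
    exact congrArg (OrbitQuot.mk K) (one_smul G x)
  mul_smul := by
    rintro ⟨a⟩ ⟨b⟩ ⟨x⟩
    exact congrArg (OrbitQuot.mk K) (mul_smul a b x)

/-- Let `K ⊴ G` act freely on `X` and `x ∈ X`.  If `L̄ ≤ G/K` fixes the orbit `K•x`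
in `X/K`, then there is exactly one subgroup `L` of the stabilizer of `x` in `G`
whose image under the quotient homomorphism `G → G/K` is `L̄`; moreover for any such
`L` the quotient homomorphism restricts to an isomorphism from `L` onto `L̄`
(it is injective on `L`, and its image is `L̄`). -/
theorem stmt_9 (K : Subgroup G) [K.Normal]
    (hfree : ∀ (k : K) (x : X), (k : G) • x = x → k = 1) (x : X)
    (L' : Subgroup (G ⧸ K))
    (hfix : ∀ g ∈ L', g • OrbitQuot.mk K x = OrbitQuot.mk K x) :
    (∃! L : Subgroup G,
        L ≤ MulAction.stabilizer G x ∧ L.map (QuotientGroup.mk' K) = L')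
    ∧ ∀ L : Subgroup G, L ≤ MulAction.stabilizer G x →
        L.map (QuotientGroup.mk' K) = L' →
        Set.InjOn (QuotientGroup.mk' K) (L : Set G) := by
  -- key injectivity fact on the stabilizer
  have hinj : ∀ a ∈ MulAction.stabilizer G x, ∀ b ∈ MulAction.stabilizer G x,
      QuotientGroup.mk' K a = QuotientGroup.mk' K b → a = b := by
    intro a ha b hb hab
    have hk : a⁻¹ * b ∈ K := QuotientGroup.eq.mp hab
    have hfix' : (a⁻¹ * b) • x = x := by
      rw [mul_smul, hb, inv_smul_eq_iff, ha]
    have := hfree ⟨a⁻¹ * b, hk⟩ x hfix'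
    have h1 : a⁻¹ * b = 1 := congrArg Subtype.val this
    exact (inv_mul_eq_one.mp h1)
  -- the canonical subgroup
  set L₀ : Subgroup G := MulAction.stabilizer G x ⊓ L'.comap (QuotientGroup.mk' K)
    with hL₀
  have hL₀le : L₀ ≤ MulAction.stabilizer G x := inf_le_left
  have hL₀map : L₀.map (QuotientGroup.mk' K) = L' := by
    apply le_antisymm
    · rintro _ ⟨g, hg, rfl⟩
      exact hg.2
    · intro g' hg'
      obtain ⟨g, rfl⟩ := QuotientGroup.mk'_surjective K g'
      have hsm : (QuotientGroup.mk' K g) • OrbitQuot.mk K x = OrbitQuot.mk K (g • x) :=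
        rfl
      have horb : g • x ∈ MulAction.orbit K x := by
        have := hfix _ hg'
        rw [hsm] at this
        exact Quotient.exact this
      obtain ⟨k, hk⟩ := horb
      refine ⟨(k : G)⁻¹ * g, ⟨?_, ?_⟩, ?_⟩
      · show ((k : G)⁻¹ * g) • x = x
        have hk' : (k : G) • x = g • x := hk
        rw [mul_smul, ← hk', inv_smul_smul]
      · show QuotientGroup.mk' K ((k : G)⁻¹ * g) ∈ L'
        have : QuotientGroup.mk' K ((k : G)⁻¹ * g) = QuotientGroup.mk' K g := by
          rw [map_mul, map_inv]
          have : QuotientGroup.mk' K (k : G) = 1 :=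
            (QuotientGroup.eq_one_iff _).mpr k.2
          rw [this, inv_one, one_mul]
        rw [this]; exact hg'
      · rw [map_mul, map_inv]
        have : QuotientGroup.mk' K (k : G) = 1 :=
          (QuotientGroup.eq_one_iff _).mpr k.2
        rw [this, inv_one, one_mul]
  refine ⟨⟨L₀, ⟨hL₀le, hL₀map⟩, ?_⟩, ?_⟩
  · -- uniqueness
    rintro L ⟨hLle, hLmap⟩
    apply le_antisymm
    · intro g hg
      have : QuotientGroup.mk' K g ∈ L₀.map (QuotientGroup.mk' K) := by
        rw [hL₀map, ← hLmap]; exact ⟨g, hg, rfl⟩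
      obtain ⟨g₀, hg₀, hgg⟩ := this
      have := hinj g₀ (hL₀le hg₀) g (hLle hg) hgg
      rwa [← this]
    · intro g hg
      have : QuotientGroup.mk' K g ∈ L.map (QuotientGroup.mk' K) := by
        rw [hLmap, ← hL₀map]; exact ⟨g, hg, rfl⟩
      obtain ⟨g₀, hg₀, hgg⟩ := this
      have := hinj g₀ (hLle hg₀) g (hL₀le hg) hgg
      rwa [← this]
  · -- injectivity on any such L
    intro L hLle _ a ha b hb hab
    exact hinj a (hLle ha) b (hLle hb) hab
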